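/- arXiv:1803.08960 — 3 statements merged into one kernel-verified Lean document; each statement's English description precedes it below -/
import Mathlib

section
/- Every Markov triple can be obtained from (1,1,1) by a finite sequence of mutations, where a mutation replaces one entry of (a,b,c), say c, by 3ab - c. -/
/-!
Vieta jumping. For fixed `a, b`, the Markov equation is a quadratic in `c` whose two roots
`c` and `c' = 3ab - c` satisfy `c c' = a² + b²`. If `c` is the largest entry of a positive
Markov triple other than `(1,1,1)`, then `a, b < c`, hence `a² + b² < c²` and `0 < c' < c`.
Mutating the largest entry therefore strictly decreases the sum, so every Markov triple
descends to `(1,1,1)`, and mutations are involutions.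
-/

/-- One mutation step on a triple: replace one of the entries, say `c`,
by `3ab - c`. -/
def MarkovStep : ℤ × ℤ × ℤ → ℤ × ℤ × ℤ → Prop := fun p q =>
  (q = (3 * p.2.1 * p.2.2 - p.1, p.2.1, p.2.2)) ∨
  (q = (p.1, 3 * p.1 * p.2.2 - p.2.1, p.2.2)) ∨
  (q = (p.1, p.2.1, 3 * p.1 * p.2.1 - p.2.2))

theorem MarkovStep.symm {p q : ℤ × ℤ × ℤ} (h : MarkovStep p q) : MarkovStep q p := by
  obtain ⟨a, b, c⟩ := p
  rcases h with rfl | rfl | rfl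
  · exact Or.inl (by simp)
  · exact Or.inr (Or.inl (by simp))
  · exact Or.inr (Or.inr (by simp))

instance : Std.Symm MarkovStep := ⟨fun _ _ => MarkovStep.symm⟩

section Descent

variable {a b c : ℤ}

theorem markov_lt_of_le (ha : 0 < a) (hac : a ≤ c) (hbc : b ≤ c) (hc : 1 < c)
    (h : a ^ 2 + b ^ 2 + c ^ 2 = 3 * a * b * c) : b < c := by
  refine lt_of_le_of_ne hbc fun hb => ?_
  subst hb
  -- `a² = b²(3a - 2) ≥ a b²` forces `a ≥ b² > b`.
  have hab2 : a * b ^ 2 ≤ a * a := by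
    nlinarith [mul_nonneg (sq_nonneg b) (by omega : (0 : ℤ) ≤ a - 1)]
  have hb2 : b ^ 2 ≤ a := le_of_mul_le_mul_left hab2 ha
  nlinarith

theorem markov_sq_add_sq_lt_sq (ha : 0 < a) (hb : 0 < b) (hac : a < c) (hbc : b < c)
    (h : a ^ 2 + b ^ 2 + c ^ 2 = 3 * a * b * c) : a ^ 2 + b ^ 2 < c ^ 2 := by
  rcases le_total a b with hab | hba <;> nlinarith [mul_pos ha hb]

theorem markov_vieta_mul (h : a ^ 2 + b ^ 2 + c ^ 2 = 3 * a * b * c) :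
    c * (3 * a * b - c) = a ^ 2 + b ^ 2 := by
  linear_combination -h

theorem markov_vieta_pos_lt (ha : 0 < a) (hb : 0 < b) (hac : a ≤ c) (hbc : b ≤ c) (hc : 1 < c)
    (h : a ^ 2 + b ^ 2 + c ^ 2 = 3 * a * b * c) :
    0 < 3 * a * b - c ∧ 3 * a * b - c < c := by
  have hmul := markov_vieta_mul h
  have hb_lt : b < c := markov_lt_of_le ha hac hbc hc h
  have ha_lt : a < c := markov_lt_of_le hb hbc hac hc (by linear_combination h)
  have hsq := markov_sq_add_sq_lt_sq ha hb ha_lt hb_lt h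
  constructor <;> nlinarith

theorem exists_markovStep_sum_lt (ha : 0 < a) (hb : 0 < b) (hc : 0 < c)
    (h : a ^ 2 + b ^ 2 + c ^ 2 = 3 * a * b * c) (hne : (a, b, c) ≠ (1, 1, 1)) :
    ∃ a' b' c' : ℤ, MarkovStep (a, b, c) (a', b', c') ∧ 0 < a' ∧ 0 < b' ∧ 0 < c' ∧
      a' ^ 2 + b' ^ 2 + c' ^ 2 = 3 * a' * b' * c' ∧ a' + b' + c' < a + b + c := by
  have hne' : 1 < a ∨ 1 < b ∨ 1 < c := by
    by_contra! hle
    exact hne (by simp only [Prod.mk.injEq]; omega)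
  rcases (by omega : (a ≤ c ∧ b ≤ c) ∨ (a ≤ b ∧ c ≤ b) ∨ (b ≤ a ∧ c ≤ a)) with
    ⟨hac, hbc⟩ | ⟨hab, hcb⟩ | ⟨hba, hca⟩
  · obtain ⟨hpos, hlt⟩ := markov_vieta_pos_lt ha hb hac hbc (by omega) h
    exact ⟨a, b, 3 * a * b - c, Or.inr (Or.inr rfl), ha, hb, hpos, by linear_combination h,
      by omega⟩
  · obtain ⟨hpos, hlt⟩ := markov_vieta_pos_lt ha hc hab hcb (by omega) (by linear_combination h)
    exact ⟨a, 3 * a * c - b, c, Or.inr (Or.inl rfl), ha, hpos, hc,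
      by linear_combination h, by omega⟩
  · obtain ⟨hpos, hlt⟩ := markov_vieta_pos_lt hb hc hba hca (by omega) (by linear_combination h)
    exact ⟨3 * b * c - a, b, c, Or.inl rfl, hpos, hb, hc, by linear_combination h, by omega⟩

end Descent

theorem markov_descends_to_one (a b c : ℤ) (ha : 0 < a) (hb : 0 < b) (hc : 0 < c)
    (h : a ^ 2 + b ^ 2 + c ^ 2 = 3 * a * b * c) :
    Relation.ReflTransGen MarkovStep (a, b, c) (1, 1, 1) := by
  by_cases hne : (a, b, c) = (1, 1, 1)
  · rw [hne]
  obtain ⟨a', b', c', hstep, ha', hb', hc', h', hlt⟩ := exists_markovStep_sum_lt ha hb hc h hne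
  exact .head hstep (markov_descends_to_one a' b' c' ha' hb' hc' h')
termination_by (a + b + c).toNat
decreasing_by omega

theorem markov_tree (a b c : ℤ) (ha : 0 < a) (hb : 0 < b) (hc : 0 < c)
    (h : a ^ 2 + b ^ 2 + c ^ 2 = 3 * a * b * c) :
    Relation.ReflTransGen MarkovStep (1, 1, 1) (a, b, c) :=
  Std.Symm.symm _ _ (markov_descends_to_one a b c ha hb hc h)
end

section
/- Fix positive integers b, c. Let (x_k)_{k∈ℤ} in ℚ(x₁,x₂) satisfy x_{k-1}x_{k+1} = x_k^b + 1 for k odd and x_{k-1}x_{k+1} = x_k^c + 1 for k even. Then for any odd m, x_{m-1}·x_{m+2}^b = ((x_{m+1}^c + 1)^b - 1)/x_{m+1} + x_{m+3}; in particular x_{m+3} ∈ ℤ[x_{m-1}, x_m, x_{m+1}, x_{m+2}]. -/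
/-!
Multiplying the identity by `x (m + 1)` turns it into a consequence of the three exchange
relations at `m`, `m + 1`, `m + 2`, using `(x m * x (m + 2)) ^ b = (x (m + 1) ^ c + 1) ^ b`.
Since `c > 0`, the constant term of `(X ^ c + 1) ^ b - 1` vanishes, so
`((q ^ c + 1) ^ b - 1) / q` is an integer polynomial in `q`, which gives the membership.
The one thing to check is `x (m + 1) ≠ 0`: specialising `x₁, x₂` to algebraically independent
positive reals, the recurrence is subtraction-free, so every `x k` specialises to a positive real.
-/

noncomputable section

abbrev F2 := FractionRing (MvPolynomial (Fin 2) ℚ)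

noncomputable def gen (i : Fin 2) : F2 :=
  algebraMap (MvPolynomial (Fin 2) ℚ) F2 (MvPolynomial.X i)

open MvPolynomial in
theorem AlgebraicIndependent.pow {ι R A : Type*} [CommRing R] [CommRing A] [Algebra R A]
    {x : ι → A} (hx : AlgebraicIndependent R x) {n : ℕ} (hn : 0 < n) :
    AlgebraicIndependent R (x ^ n) := by
  have : ⇑(aeval (x ^ n) : MvPolynomial ι R →ₐ[R] A) = aeval x ∘ expand n := by
    ext φ; simp
  rw [AlgebraicIndependent, this]
  exact Function.Injective.comp hx (expand_injective hn)

open Cardinal in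
theorem IsTranscendenceBasis.not_countable_real {ι : Type} {y : ι → ℝ}
    (hy : IsTranscendenceBasis ℚ y) : ¬ Countable ι := by
  intro hι
  have : Algebra.IsAlgebraic (Algebra.adjoin ℚ (Set.range y)) ℝ := hy.isAlgebraic
  have hK : #(Algebra.adjoin ℚ (Set.range y)) ≤ ℵ₀ := by
    rw [← mk_congr hy.1.aevalEquiv.toEquiv]
    simp
  have hℝ : #ℝ ≤ ℵ₀ :=
    (Algebra.IsAlgebraic.cardinalMk_le_max (Algebra.adjoin ℚ (Set.range y)) ℝ).trans
      (max_le hK le_rfl)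
  exact Cardinal.not_countable_real (Set.countable_univ_iff.mpr (mk_le_aleph0_iff.mp hℝ))

open Cardinal in
theorem exists_algebraicIndependent_real_pos (ι : Type) [Countable ι] :
    ∃ y : ι → ℝ, AlgebraicIndependent ℚ y ∧ ∀ i, 0 < y i := by
  obtain ⟨s, hs⟩ := exists_isTranscendenceBasis ℚ ℝ
  have hs' : Uncountable s := ⟨hs.not_countable_real⟩
  obtain ⟨e⟩ := (le_def ι s).mp (mk_le_aleph0.trans (aleph0_lt_mk_iff.mpr hs').le)
  have he : AlgebraicIndependent ℚ (fun i => (e i : ℝ)) := hs.1.comp e e.injective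
  refine ⟨(fun i => (e i : ℝ)) ^ 2, he.pow two_pos, fun i => ?_⟩
  have := he.ne_zero i
  simp only [Pi.pow_apply]
  positivity

open MvPolynomial in
theorem exists_ringHom_fractionRing_real_pos (ι : Type) [Countable ι] :
    ∃ φ : FractionRing (MvPolynomial ι ℚ) →+* ℝ,
      ∀ i, 0 < φ (algebraMap (MvPolynomial ι ℚ) _ (X i)) := by
  obtain ⟨y, hy, hpos⟩ := exists_algebraicIndependent_real_pos ι
  have hy' : Function.Injective ((aeval y : MvPolynomial ι ℚ →ₐ[ℚ] ℝ) : MvPolynomial ι ℚ →+* ℝ) :=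
    hy
  refine ⟨IsFractionRing.lift hy', fun i => ?_⟩
  rw [IsFractionRing.lift_algebraMap]
  simpa using hpos i

theorem pos_of_mul_eq_pow_add_one {K : Type*} [Semiring K] [LinearOrder K] [IsStrictOrderedRing K]
    {y : ℤ → K} (e : ℤ → ℕ) (hy : ∀ k, y (k - 1) * y (k + 1) = y k ^ e k + 1) {n : ℤ}
    (hn : 0 < y n) (hn' : 0 < y (n + 1)) (k : ℤ) : 0 < y k := by
  have hrhs : ∀ k, 0 < y k → 0 < y (k - 1) * y (k + 1) := fun k hk => by
    rw [hy]; positivity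
  suffices ∀ k, 0 < y k ∧ 0 < y (k + 1) from (this k).1
  intro k
  induction k using Int.inductionOn' (b := n) with
  | zero => exact ⟨hn, hn'⟩
  | succ j _ ih =>
    have := hrhs (j + 1) ih.2
    rw [add_sub_cancel_right] at this
    exact ⟨ih.2, pos_of_mul_pos_right this ih.1.le⟩
  | pred j _ ih =>
    rw [sub_add_cancel]
    exact ⟨pos_of_mul_pos_left (hrhs j ih.1) ih.2.le, ih.1⟩

theorem ne_zero_of_mul_eq_pow_add_one {K : Type*} [Field K] {x : ℤ → K} (e : ℤ → ℕ)
    (hx : ∀ k, x (k - 1) * x (k + 1) = x k ^ e k + 1) (φ : K →+* ℝ) {n : ℤ}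
    (hn : 0 < φ (x n)) (hn' : 0 < φ (x (n + 1))) (k : ℤ) : x k ≠ 0 := by
  have hφx : ∀ k, φ (x (k - 1)) * φ (x (k + 1)) = φ (x k) ^ e k + 1 := fun k => by
    rw [← map_mul, hx, map_add, map_pow, map_one]
  have := pos_of_mul_eq_pow_add_one (y := fun k => φ (x k)) e hφx hn hn' k
  exact fun h => by simp [h] at this

theorem mul_pow_eq_div_add_of_exchange {K : Type*} [Field K] {b c : ℕ} {x₀ x₁ x₂ x₃ x₄ : K}
    (hx₂ : x₂ ≠ 0) (h₁ : x₀ * x₂ = x₁ ^ b + 1) (h₂ : x₁ * x₃ = x₂ ^ c + 1)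
    (h₃ : x₂ * x₄ = x₃ ^ b + 1) :
    x₀ * x₃ ^ b = ((x₂ ^ c + 1) ^ b - 1) / x₂ + x₄ := by
  have h₂b : (x₂ ^ c + 1) ^ b = x₁ ^ b * x₃ ^ b := by rw [← h₂, mul_pow]
  rw [div_add' _ _ _ hx₂, eq_div_iff hx₂]
  linear_combination x₃ ^ b * h₁ - h₂b - h₃

-- An arbitrary `Algebra ℤ R`, so that the lemma applies to the `ℤ`-algebra structure `F2`
-- inherits as a localization, not only to `Ring.toIntAlgebra`.
open Polynomial in
theorem exists_mem_adjoin_mul_eq_add_one_pow_sub_one {R : Type*} [CommRing R] [Algebra ℤ R]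
    (q : R) (b : ℕ) {c : ℕ} (hc : 0 < c) :
    ∃ p ∈ Algebra.adjoin ℤ {q}, q * p = (q ^ c + 1) ^ b - 1 := by
  obtain ⟨P, hP⟩ : (X : ℤ[X]) ∣ (X ^ c + 1) ^ b - 1 := by
    rw [X_dvd_iff, coeff_zero_eq_eval_zero]
    simp [hc.ne']
  refine ⟨aeval q P, aeval_mem_adjoin_singleton ℤ q, ?_⟩
  simpa using congrArg (aeval q) hP.symm

theorem rank2_lower_bound_step_general (b c : ℕ) (hc : 0 < c)
    (x : ℤ → F2) (h1 : x 1 = gen 0) (h2 : x 2 = gen 1)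
    (hrec : ∀ k : ℤ,
      x (k - 1) * x (k + 1) = if Odd k then x k ^ b + 1 else x k ^ c + 1)
    (m : ℤ) (hm : Odd m) :
    x (m - 1) * x (m + 2) ^ b =
      ((x (m + 1) ^ c + 1) ^ b - 1) / x (m + 1) + x (m + 3) ∧
    x (m + 3) ∈ Algebra.adjoin ℤ
      ({x (m - 1), x m, x (m + 1), x (m + 2)} : Set F2) := by
  have hrec' : ∀ k, x (k - 1) * x (k + 1) = x k ^ (if Odd k then b else c) + 1 := fun k => by
    rw [hrec k]
    split_ifs <;> rfl
  obtain ⟨φ, hφ⟩ := exists_ringHom_fractionRing_real_pos (Fin 2)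
  have hx : x (m + 1) ≠ 0 := by
    refine ne_zero_of_mul_eq_pow_add_one _ hrec' φ (n := 1) ?_ ?_ _
    · rw [h1]; exact hφ 0
    · rw [show (1 : ℤ) + 1 = 2 from rfl, h2]; exact hφ 1
  have h₁ : x (m - 1) * x (m + 1) = x m ^ b + 1 := by
    rw [hrec, if_pos hm]
  have h₂ : x m * x (m + 2) = x (m + 1) ^ c + 1 := by
    have := hrec (m + 1)
    rwa [if_neg (Int.not_odd_iff_even.mpr hm.add_one), add_sub_cancel_right, add_assoc,
      one_add_one_eq_two] at this
  have h₃ : x (m + 1) * x (m + 3) = x (m + 2) ^ b + 1 := by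
    have := hrec (m + 2)
    rwa [if_pos (hm.add_even even_two), show m + 2 - 1 = m + 1 by ring, add_assoc,
      show (2 : ℤ) + 1 = 3 by norm_num] at this
  have hid := mul_pow_eq_div_add_of_exchange hx h₁ h₂ h₃
  refine ⟨hid, ?_⟩
  obtain ⟨p, hp, hxp⟩ := exists_mem_adjoin_mul_eq_add_one_pow_sub_one (x (m + 1)) b hc
  rw [← hxp, mul_div_cancel_left₀ _ hx, ← sub_eq_iff_eq_add'] at hid
  rw [← hid]
  exact sub_mem (mul_mem (Algebra.subset_adjoin (by simp))
    (pow_mem (Algebra.subset_adjoin (by simp)) _)) (Algebra.adjoin_mono (by simp) hp)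

theorem rank2_lower_bound_step (b c : ℕ) (hb : 0 < b) (hc : 0 < c)
    (x : ℤ → F2) (h1 : x 1 = gen 0) (h2 : x 2 = gen 1)
    (hrec : ∀ k : ℤ,
      x (k - 1) * x (k + 1) = if Odd k then x k ^ b + 1 else x k ^ c + 1)
    (m : ℤ) (hm : Odd m) :
    x (m - 1) * x (m + 2) ^ b =
      ((x (m + 1) ^ c + 1) ^ b - 1) / x (m + 1) + x (m + 3) ∧
    x (m + 3) ∈ Algebra.adjoin ℤ
      ({x (m - 1), x m, x (m + 1), x (m + 2)} : Set F2) :=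
  rank2_lower_bound_step_general b c hc x h1 h2 hrec m hm

end
end

section
/- Laurent phenomenon in rank 2: for positive integers b, c and the sequence (x_k) in ℚ(x₁,x₂) satisfying x_{k-1}x_{k+1} = x_k^b + 1 for k odd and x_{k-1}x_{k+1} = x_k^c + 1 for k even, every x_k is a Laurent polynomial with integer coefficients in x₁ and x₂. -/
/-!
Work in the Laurent ring `L = ℤ[x₁^±1, x₂^±1]`, a unique factorization domain. Suppose
`x_{k-1}, x_k, x_{k+1}` lie in `L` and `x_k ∣ x_{k-1}^e + 1` in `L`, where `e = e(k-1) = e(k+1)`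
and `x_{k-1} x_{k+1} = x_k^{e'} + 1`. Then `x_{k-1}` is prime to `x_k`, and
`x_{k-1}^e (x_{k+1}^e + 1) = ((x_k^{e'} + 1)^e - 1) + (x_{k-1}^e + 1)` is divisible by `x_k`,
so `x_k ∣ x_{k+1}^e + 1`: the next term `x_{k+2}` lies in `L` and the situation shifts by one.
Starting from the units `x₁, x₂` this runs forward, and backward by the symmetry `k ↦ 3 - k`.
All terms are positive at `x₁ = x₂ = 1`, hence nonzero, which is what makes the division legal.
-/

noncomputable section

section Exchange

variable {R : Type*} [CommRing R]

theorem isRelPrime_of_dvd_pow_add_one {o p : R} {e : ℕ} (he : e ≠ 0) (h : p ∣ o ^ e + 1) :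
    IsRelPrime o p := fun _ hdo hdp =>
  isUnit_of_dvd_one <| (dvd_add_right (dvd_pow hdo he)).mp (hdp.trans h)

theorem dvd_pow_add_one_of_mul_eq [DecompositionMonoid R] {o p q : R} {e e' : ℕ}
    (he : e ≠ 0) (he' : e' ≠ 0) (hp : p ∣ o ^ e + 1) (hq : o * q = p ^ e' + 1) :
    p ∣ q ^ e + 1 := by
  have hcop : IsRelPrime p (o ^ e) := (isRelPrime_of_dvd_pow_add_one he hp).pow_left.symm
  refine hcop.dvd_of_dvd_mul_left ?_
  have hp' : p ∣ (p ^ e' + 1) ^ e - 1 := by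
    have := sub_dvd_pow_sub_pow (p ^ e' + 1) 1 e
    rw [add_sub_cancel_right, one_pow] at this
    exact (dvd_pow_self p he').trans this
  have hsplit : o ^ e * (q ^ e + 1) = ((p ^ e' + 1) ^ e - 1) + (o ^ e + 1) := by
    rw [← hq]; ring
  rw [hsplit]
  exact dvd_add hp' hp

end Exchange

def IsExchangeSequence {K : Type*} [Semiring K] (e : ℤ → ℕ) (y : ℤ → K) : Prop :=
  ∀ k, y (k - 1) * y (k + 1) = y k ^ e k + 1

theorem IsExchangeSequence.reverse {K : Type*} [CommSemiring K] {e : ℤ → ℕ} {y : ℤ → K}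
    (hy : IsExchangeSequence e y) (m : ℤ) :
    IsExchangeSequence (fun k => e (m - k)) (fun k => y (m - k)) := fun k => by
  simpa [mul_comm, ← sub_sub, sub_sub_eq_add_sub, sub_add] using hy (m - k)

section Sequence

variable {R K S : Type*} [CommRing R] [CommRing K] [IsDomain K]
  [CommRing S] [LinearOrder S] [IsStrictOrderedRing S]
  (ψ : R →+* K) (ev : R →+* S) (e : ℤ → ℕ) (y : ℤ → K)

def ExchangeTriple (k : ℤ) : Prop :=
  ∃ o p q : R, y (k - 1) = ψ o ∧ y k = ψ p ∧ y (k + 1) = ψ q ∧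
    p ∣ o ^ e (k - 1) + 1 ∧ 0 < ev p ∧ 0 < ev q

variable {ψ ev e y}

theorem ExchangeTriple.succ [DecompositionMonoid R] (hψ : Function.Injective ψ)
    (he : ∀ k, e k ≠ 0) (hper : Function.Periodic e 2) (hy : IsExchangeSequence e y) {k : ℤ}
    (h : ExchangeTriple ψ ev e y k) : ExchangeTriple ψ ev e y (k + 1) := by
  obtain ⟨o, p, q, ho, hp, hq, hdvd, hevp, hevq⟩ := h
  have hoq : o * q = p ^ e k + 1 := hψ <| by simpa [← ho, ← hp, ← hq] using hy k
  have hper' : e (k + 1) = e (k - 1) := by simpa [sub_add] using hper (k - 1)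
  obtain ⟨r, hr⟩ := dvd_pow_add_one_of_mul_eq (he _) (he _) hdvd hoq
  have hp0 : ψ p ≠ 0 := (map_ne_zero_iff ψ hψ).mpr fun h0 => by simp [h0] at hevp
  have hq_dvd : q ∣ p ^ e (k + 1 - 1) + 1 :=
    ⟨o, by rw [add_sub_cancel_right, ← hoq, mul_comm]⟩
  refine ⟨p, q, r, by simpa using hp, hq, ?_, hq_dvd, hevq, ?_⟩
  · refine mul_left_cancel₀ hp0 ?_
    have := hy (k + 1)
    rw [add_sub_cancel_right, hper', hp, hq] at this
    rw [this, ← map_mul, ← hr]; simp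
  · refine pos_of_mul_pos_right (a := ev p) ?_ hevp.le
    rw [← map_mul, ← hr]; simpa using add_pos (pow_pos hevq _) one_pos

theorem exchangeTriple_of_isUnit (hy : IsExchangeSequence e y)
    {k : ℤ} {o p : R} (ho : y (k - 1) = ψ o) (hp : y k = ψ p) (hou : IsUnit o) (hpu : IsUnit p)
    (hevo : 0 < ev o) (hevp : 0 < ev p) : ExchangeTriple ψ ev e y k := by
  obtain ⟨u, rfl⟩ := hou
  have hmul : (u : R) * (↑u⁻¹ * (p ^ e k + 1)) = p ^ e k + 1 := Units.mul_inv_cancel_left _ _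
  refine ⟨u, p, ↑u⁻¹ * (p ^ e k + 1), ho, hp, ?_, hpu.dvd, hevp, ?_⟩
  · refine mul_left_cancel₀ (u.isUnit.map ψ).ne_zero ?_
    rw [← map_mul, hmul, ← ho, hy k, hp]; simp
  · refine pos_of_mul_pos_right (a := ev u) ?_ hevo.le
    rw [← map_mul, hmul]; simpa using add_pos (pow_pos hevp _) one_pos

theorem ExchangeTriple.mem_range [DecompositionMonoid R] (hψ : Function.Injective ψ)
    (he : ∀ k, e k ≠ 0) (hper : Function.Periodic e 2) (hy : IsExchangeSequence e y) {k₀ : ℤ}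
    (h : ExchangeTriple ψ ev e y k₀) {k : ℤ} (hk : k₀ - 1 ≤ k) : y k ∈ ψ.range := by
  have htriple : ∀ n, k₀ ≤ n → ExchangeTriple ψ ev e y n := fun n hn => by
    induction n, hn using Int.leInduction with
    | base => exact h
    | succ n _ ih => exact ih.succ hψ he hper hy
  obtain ⟨o, -, -, ho, -⟩ := htriple (k + 1) (by omega)
  exact ⟨o, by simpa using ho.symm⟩

theorem IsExchangeSequence.forall_mem_range [DecompositionMonoid R] (hψ : Function.Injective ψ)
    (he : ∀ k, e k ≠ 0) (hper : Function.Periodic e 2) (hy : IsExchangeSequence e y) {k₀ : ℤ}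
    {o p : R} (ho : y (k₀ - 1) = ψ o) (hp : y k₀ = ψ p) (hou : IsUnit o) (hpu : IsUnit p)
    (hevo : 0 < ev o) (hevp : 0 < ev p) (k : ℤ) : y k ∈ ψ.range := by
  rcases le_total (k₀ - 1) k with hk | hk
  · exact (exchangeTriple_of_isUnit hy ho hp hou hpu hevo hevp).mem_range hψ he hper hy hk
  · set m := 2 * k₀ - 1
    have hrev : ExchangeTriple ψ ev (fun k => e (m - k)) (fun k => y (m - k)) k₀ :=
      exchangeTriple_of_isUnit (hy.reverse m) (by convert hp using 2; ring)
        (by convert ho using 2; ring) hpu hou hevp hevo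
    have := hrev.mem_range hψ (fun _ => he _) (hper.const_sub m) (hy.reverse m)
      (k := m - k) (by omega)
    simpa using this

end Sequence

open MvPolynomial

theorem gen_ne_zero (i : Fin 2) : gen i ≠ 0 :=
  (IsFractionRing.injective _ _).ne_iff' (map_zero _) |>.mpr (X_ne_zero i)

theorem aeval_gen_injective : Function.Injective (aeval (R := ℤ) gen) := by
  have h : ∀ a, aeval (R := ℤ) gen a =
      algebraMap (MvPolynomial (Fin 2) ℚ) F2 (map (Int.castRingHom ℚ) a) := by
    intro a
    induction a using MvPolynomial.induction_on <;> simp_all [gen]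
  intro a b hab
  rw [h, h] at hab
  exact map_injective _ Int.cast_injective (IsFractionRing.injective _ _ hab)

local notation "x₁x₂" => (X 0 * X 1 : MvPolynomial (Fin 2) ℤ)

/-- `ℤ[x₁^±1, x₂^±1]`, a UFD as a localization of one, hence a `DecompositionMonoid`. -/
abbrev LaurentRing := Localization.Away x₁x₂

namespace LaurentRing

instance : IsDomain LaurentRing :=
  IsLocalization.Away.isDomain LaurentRing (x := x₁x₂)
    (mul_ne_zero (X_ne_zero _) (X_ne_zero _))

def var (i : Fin 2) : LaurentRing := algebraMap (MvPolynomial (Fin 2) ℤ) LaurentRing (X i)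

theorem isUnit_var (i : Fin 2) : IsUnit (var i) := by
  have hdvd : (X i : MvPolynomial (Fin 2) ℤ) ∣ x₁x₂ := by
    fin_cases i
    exacts [dvd_mul_right _ _, dvd_mul_left _ _]
  exact isUnit_of_dvd_unit (map_dvd (algebraMap _ LaurentRing) hdvd)
    (IsLocalization.Away.algebraMap_isUnit _)

def toF2 : LaurentRing →+* F2 :=
  Localization.awayLift (aeval (R := ℤ) gen).toRingHom x₁x₂ <| by
    simpa using mul_ne_zero (gen_ne_zero 0) (gen_ne_zero 1)

def evalOne : LaurentRing →+* ℤ :=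
  Localization.awayLift (eval 1) x₁x₂ (by simp)

theorem toF2_algebraMap (a : MvPolynomial (Fin 2) ℤ) :
    toF2 (algebraMap _ _ a) = aeval gen a := by
  simp [toF2, Localization.awayLift, IsLocalization.Away.lift_eq]

theorem toF2_var (i : Fin 2) : toF2 (var i) = gen i := by
  simp [var, toF2_algebraMap]

theorem evalOne_var (i : Fin 2) : evalOne (var i) = 1 := by
  simp [evalOne, var, Localization.awayLift, IsLocalization.Away.lift_eq]

theorem toF2_injective : Function.Injective toF2 :=
  IsLocalization.injective_of_map_algebraMap_zero (M := Submonoid.powers x₁x₂) _ _ fun a ha => by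
    rw [toF2_algebraMap, ← map_zero (aeval (R := ℤ) gen), aeval_gen_injective.eq_iff] at ha
    rw [ha, map_zero]

theorem toF2_mem_adjoin (z : LaurentRing) :
    toF2 z ∈ Algebra.adjoin ℤ ({gen 0, gen 1, (gen 0)⁻¹, (gen 1)⁻¹} : Set F2) := by
  set A := Algebra.adjoin ℤ ({gen 0, gen 1, (gen 0)⁻¹, (gen 1)⁻¹} : Set F2)
  obtain ⟨n, a, hz⟩ := IsLocalization.Away.surj x₁x₂ z
  have hgen : gen 0 * gen 1 ≠ 0 := mul_ne_zero (gen_ne_zero 0) (gen_ne_zero 1)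
  have hz' : toF2 z = aeval gen a * ((gen 0)⁻¹ * (gen 1)⁻¹) ^ n := by
    rw [← mul_inv, inv_pow, eq_mul_inv_iff_mul_eq₀ (pow_ne_zero n hgen), ← toF2_algebraMap,
      ← hz]
    simp [toF2_algebraMap]
  have ha : aeval gen a ∈ A := by
    have ha : aeval gen a ∈ (aeval (R := ℤ) gen).range := ⟨a, rfl⟩
    rw [← Algebra.adjoin_range_eq_range_aeval] at ha
    refine Algebra.adjoin_mono ?_ ha
    rintro _ ⟨i, rfl⟩
    fin_cases i <;> simp
  rw [hz']
  refine mul_mem ha (pow_mem (mul_mem (Algebra.subset_adjoin ?_) (Algebra.subset_adjoin ?_)) n)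
    <;> simp

end LaurentRing

open LaurentRing in
/-- The Laurent phenomenon in rank 2: every cluster variable is an integer
Laurent polynomial in the initial cluster `x₁, x₂`. -/
theorem rank2_laurent_phenomenon (b c : ℕ) (hb : 0 < b) (hc : 0 < c)
    (x : ℤ → F2) (h1 : x 1 = gen 0) (h2 : x 2 = gen 1)
    (hrec : ∀ k : ℤ,
      x (k - 1) * x (k + 1) = if Odd k then x k ^ b + 1 else x k ^ c + 1) :
    ∀ k : ℤ, x k ∈ Algebra.adjoin ℤ
      ({gen 0, gen 1, (gen 0)⁻¹, (gen 1)⁻¹} : Set F2) := by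
  set e : ℤ → ℕ := fun k => if Odd k then b else c
  have hx : IsExchangeSequence e x := fun k =>
    (hrec k).trans (apply_ite (fun n => x k ^ n + 1) _ _ _).symm
  have he : ∀ k, e k ≠ 0 := fun k => by dsimp only [e]; split_ifs <;> omega
  have hper : Function.Periodic e 2 := fun k => by simp [e]
  intro k
  obtain ⟨z, hz⟩ := hx.forall_mem_range toF2_injective he hper (ev := evalOne) (k₀ := 2)
    (by norm_num [h1, toF2_var]) (by norm_num [h2, toF2_var]) (isUnit_var 0) (isUnit_var 1)
    (by simp [evalOne_var]) (by simp [evalOne_var]) k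
  exact hz ▸ toF2_mem_adjoin z

end
end
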